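/- arXiv:1408.5797 — 2 statements merged into one kernel-verified Lean document; each statement's English description precedes it below -/
import Mathlib

section
/- Fix 1 ≤ p < 2 and set α = 2 − p. Let u satisfy Hypothesis B on an open set containing the closed ball of radius R₀ > 0 about 0 in ℝⁿ, and define the rescaled functions u_r(x) = (u(rx) − u(0))/r^α for r > 0 (defined for |x| ≤ R₀/r). Let Θ^M(u, 0) = lim_{t↓0} (M(u, 0, t) − u(0))/t^α. Then: (i) for every ρ > 0, limsup_{r↓0} ‖u_r‖_α(B_ρ) ≤ Θ^M(u, 0), where ‖v‖_α(B_ρ) = sup_{x ≠ y, |x|,|y| ≤ ρ} |v(x) − v(y)|/|x−y|^α; in particular for every ρ > 0 there is δ > 0 such that the family {u_r}_{0 < r ≤ δ} is bounded in α-Hölder seminorm on the closed ball B_ρ; and (ii) every sequence r_j ↓ 0 has a subsequence along which u_{r_j} converges uniformly on compact subsets of ℝⁿ. -/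
/-!
Write `α = 2 − p` and `Q(t) = (M(u, 0, t) − u(0)) / t^α`. Double monotonicity at the centre `0`
with `s = s' = 0` makes `Q` nondecreasing, so `Θ = lim_{t↓0} Q(t)` exists. Applied at the centre
`ry` with radii `s = 0 < t = |rx − ry|` and `s' = ρr < t' = cr`, it gives
`u(rx) − u(ry) ≤ Q((ρ + c)r) · (ρ + c)^α / (c^α − ρ^α) · r^α |x − y|^α` for `|x|, |y| ≤ ρ`;
since the middle factor tends to `1` as `c → ∞`, the rescalings `u_r` are `(Θ + ε)`-Hölder on
`B_ρ` for small `r`. Arzelà–Ascoli then gives (ii): a diagonal subsequence converges on a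
countable dense set, and equicontinuity upgrades this to locally uniform convergence.
-/

open Set Filter Topology

noncomputable section

abbrev EucSp (n : ℕ) := EuclideanSpace ℝ (Fin n)

/-- The ball maximum `M(u, y, t) = sup_{|x − y| ≤ t} u(x)` (so `M(u, y, 0) = u(y)`). -/
def ballSup {n : ℕ} (u : EucSp n → EReal) (y : EucSp n) (t : ℝ) : EReal :=
  sSup (u '' Metric.closedBall y t)

/-- Hypothesis B (for `1 ≤ p < 2`, `α = 2 − p`): `X` is open, `u` is upper
semicontinuous with values in `[−∞, ∞)`, not identically `−∞` on any ball contained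
in `X`, the maximum principle holds, and `K_p` double monotonicity holds:
`(M(u,y,t) − M(u,y,s))/(t^α − s^α)` is nondecreasing in `s` and `t` (stated in
cross-multiplied form in `EReal`). -/
def HypB {n : ℕ} (p : ℝ) (X : Set (EucSp n)) (u : EucSp n → EReal) : Prop :=
  IsOpen X ∧ UpperSemicontinuousOn u X ∧ (∀ x ∈ X, u x < ⊤) ∧
  (∀ y : EucSp n, ∀ r : ℝ, 0 < r → Metric.closedBall y r ⊆ X →
    ∃ x ∈ Metric.closedBall y r, u x ≠ ⊥) ∧
  (∀ y : EucSp n, ∀ t : ℝ, 0 < t → Metric.closedBall y t ⊆ X →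
    ballSup u y t = sSup (u '' Metric.sphere y t)) ∧
  (∀ y ∈ X, ∀ s t s' t' : ℝ, 0 ≤ s → s < t → s ≤ s' → t ≤ t' → s' < t' →
    Metric.closedBall y t' ⊆ X →
    (ballSup u y t - ballSup u y s) * (((t' ^ (2 - p) - s' ^ (2 - p) : ℝ)) : EReal) ≤
      (ballSup u y t' - ballSup u y s') * (((t ^ (2 - p) - s ^ (2 - p) : ℝ)) : EReal))

/-- The `α`-Hölder seminorm of a real-valued function `v` on a set `K`. -/
def holderSemiR {n : ℕ} (α : ℝ) (v : EucSp n → ℝ) (K : Set (EucSp n)) : ℝ :=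
  sSup {c : ℝ | ∃ x ∈ K, ∃ y ∈ K, x ≠ y ∧ c = |v x - v y| / dist x y ^ α}

open Metric

theorem holderSemiR_le {n : ℕ} {α C : ℝ} {v : EucSp n → ℝ} {K : Set (EucSp n)} (hC : 0 ≤ C)
    (h : ∀ x ∈ K, ∀ y ∈ K, |v x - v y| ≤ C * dist x y ^ α) : holderSemiR α v K ≤ C := by
  refine Real.sSup_le ?_ hC
  rintro _ ⟨x, hx, y, hy, hxy, rfl⟩
  exact div_le_of_le_mul₀ (Real.rpow_nonneg dist_nonneg _) hC (h x hx y hy)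

theorem exists_forall_of_eventually_nhdsGT {P : ℝ → Prop} (h : ∀ᶠ r in 𝓝[>] 0, P r) :
    ∃ δ : ℝ, 0 < δ ∧ ∀ r : ℝ, 0 < r → r ≤ δ → P r := by
  obtain ⟨δ, hδ, hP⟩ := mem_nhdsGT_iff_exists_Ioc_subset.1 h
  exact ⟨δ, hδ, fun r hr hrδ => hP ⟨hr, hrδ⟩⟩

theorem tendsto_rpow_add_div_rpow_sub {α ρ : ℝ} (hα : 0 < α) (hρ : 0 ≤ ρ) :
    Tendsto (fun c : ℝ => (ρ + c) ^ α / (c ^ α - ρ ^ α)) atTop (𝓝 1) := by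
  have hg : ContinuousAt (fun s : ℝ => (s + 1) ^ α / (1 - s ^ α)) 0 := by
    refine ((Real.continuousAt_rpow_const _ _ (Or.inr hα.le)).comp
      (continuousAt_id.add continuousAt_const)).div
      (continuousAt_const.sub (Real.continuousAt_rpow_const _ _ (Or.inr hα.le))) ?_
    simp [Real.zero_rpow hα.ne']
  have hlim := hg.tendsto.comp (tendsto_const_nhds.div_atTop tendsto_id :
    Tendsto (fun c : ℝ => ρ / c) atTop (𝓝 0))
  simp only [zero_add, Real.one_rpow, Real.zero_rpow hα.ne', sub_zero, div_one] at hlim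
  refine hlim.congr' ?_
  filter_upwards [eventually_gt_atTop 0] with c hc
  simp only [Function.comp_apply]
  rw [div_add_one hc.ne', Real.div_rpow (by linarith) hc.le, Real.div_rpow hρ hc.le]
  field_simp

section Compactness

variable {E : Type*} [PseudoMetricSpace E]

theorem exists_strictMono_tendsto_of_eventually_bounded {ι : Type*} [Countable ι]
    (g : ℕ → ι → ℝ) (hg : ∀ i, ∃ B, ∀ᶠ j in atTop, |g j i| ≤ B) :
    ∃ σ : ℕ → ℕ, StrictMono σ ∧ ∀ i, ∃ a, Tendsto (fun j => g (σ j) i) atTop (𝓝 a) := by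
  choose B hB using hg
  have hB₀ : ∀ i, 0 ≤ B i := fun i =>
    let ⟨_, hj⟩ := (hB i).exists
    (abs_nonneg _).trans hj
  -- Clamping into the compact box `∏ [-B i, B i]` changes each coordinate only finitely often.
  set clamp : ℕ → ι → ℝ := fun j i => max (-B i) (min (g j i) (B i))
  have hbox : IsCompact (univ.pi fun i => Icc (-B i) (B i)) :=
    isCompact_univ_pi fun _ => isCompact_Icc
  obtain ⟨a, -, σ, hσ, hlim⟩ := hbox.tendsto_subseq (x := clamp) fun j i _ =>
    ⟨le_max_left _ _, max_le (by linarith [hB₀ i]) (min_le_right _ _)⟩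
  refine ⟨σ, hσ, fun i => ⟨a i, ((continuous_apply i).tendsto a |>.comp hlim).congr' ?_⟩⟩
  filter_upwards [hσ.tendsto_atTop.eventually (hB i)] with j hj
  obtain ⟨hlow, hup⟩ := abs_le.1 hj
  simp [clamp, min_eq_left hup, max_eq_right hlow]

theorem uniformCauchySeqOn_closedBall_of_holder [ProperSpace E] {α : ℝ} (hα : 0 < α)
    {F : ℕ → E → ℝ} {x₀ : E} {ρ C : ℝ}
    (hF : ∀ᶠ j in atTop, ∀ x ∈ closedBall x₀ (ρ + 1), ∀ y ∈ closedBall x₀ (ρ + 1),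
      |F j x - F j y| ≤ C * dist x y ^ α)
    {D : ℕ → E} (hD : DenseRange D) (hconv : ∀ k, CauchySeq fun j => F j (D k)) :
    UniformCauchySeqOn F atTop (closedBall x₀ ρ) := by
  intro U hU
  obtain ⟨ε, hε, hεU⟩ := Metric.mem_uniformity_dist.1 hU
  have hsmall : Tendsto (fun d : ℝ => C * d ^ α) (𝓝 0) (𝓝 0) := by
    simpa [Real.zero_rpow hα.ne'] using
      ((Real.continuousAt_rpow_const 0 α (Or.inr hα.le)).const_mul C).tendsto
  obtain ⟨η, hη, hηC⟩ := Metric.eventually_nhds_iff.1 (hsmall.eventually (gt_mem_nhds (by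
    positivity : 0 < ε / 3)))
  obtain ⟨T, hT⟩ := (isCompact_closedBall x₀ ρ).elim_finite_subcover
    (fun i => ball (D i) (min η 1)) (fun _ => isOpen_ball)
    (fun x _ => mem_iUnion.2 (hD.exists_dist_lt x (lt_min hη one_pos)))
  have hTconv : ∀ᶠ m in atTop ×ˢ atTop, ∀ i ∈ T, dist (F m.1 (D i)) (F m.2 (D i)) < ε / 3 := by
    rw [prod_atTop_atTop_eq, T.eventually_all]
    exact fun i _ => (cauchySeq_iff_tendsto_dist_atTop_0.1 (hconv i)).eventually
      (gt_mem_nhds (by positivity : 0 < ε / 3))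
  filter_upwards [hTconv, tendsto_fst.eventually hF, tendsto_snd.eventually hF]
    with m hm hm₁ hm₂ x hx
  obtain ⟨i, hiT, hxi⟩ := mem_iUnion₂.1 (hT hx)
  have hxi' : dist x (D i) < min η 1 := hxi
  have hx' : x ∈ closedBall x₀ (ρ + 1) :=
    closedBall_subset_closedBall (by linarith) hx
  have hDi : D i ∈ closedBall x₀ (ρ + 1) := by
    rw [mem_closedBall] at hx ⊢
    linarith [dist_triangle_left (D i) x₀ x, min_le_right η 1]
  have hnear : ∀ j, (∀ x ∈ closedBall x₀ (ρ + 1), ∀ y ∈ closedBall x₀ (ρ + 1),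
      |F j x - F j y| ≤ C * dist x y ^ α) → dist (F j x) (F j (D i)) < ε / 3 := by
    intro j hj
    refine (hj x hx' (D i) hDi).trans_lt (hηC ?_)
    rw [Real.dist_0_eq_abs, abs_of_nonneg dist_nonneg]
    exact hxi'.trans_le (min_le_left _ _)
  apply hεU
  calc dist (F m.1 x) (F m.2 x)
      ≤ dist (F m.1 x) (F m.1 (D i)) + dist (F m.1 (D i)) (F m.2 (D i))
          + dist (F m.2 (D i)) (F m.2 x) := dist_triangle4 _ _ _ _
    _ < ε / 3 + ε / 3 + ε / 3 := by
      gcongr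
      exacts [hnear _ hm₁, hm i hiT, dist_comm (F m.2 x) _ ▸ hnear _ hm₂]
    _ = ε := by ring

theorem exists_strictMono_tendstoLocallyUniformly_of_holder [ProperSpace E] {α : ℝ}
    (hα : 0 < α) {F : ℕ → E → ℝ} {x₀ : E} (h₀ : ∃ B, ∀ᶠ j in atTop, |F j x₀| ≤ B)
    (hF : ∀ ρ : ℝ, 0 < ρ → ∃ C, ∀ᶠ j in atTop, ∀ x ∈ closedBall x₀ ρ, ∀ y ∈ closedBall x₀ ρ,
      |F j x - F j y| ≤ C * dist x y ^ α) :
    ∃ σ : ℕ → ℕ, StrictMono σ ∧ ∃ v : E → ℝ,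
      TendstoLocallyUniformly (fun j => F (σ j)) v atTop := by
  have : Nonempty E := ⟨x₀⟩
  obtain ⟨D, hD⟩ := TopologicalSpace.exists_dense_seq E
  have hbdd : ∀ k, ∃ B, ∀ᶠ j in atTop, |F j (D k)| ≤ B := by
    intro k
    obtain ⟨B, hB⟩ := h₀
    obtain ⟨C, hC⟩ := hF (dist (D k) x₀ + 1) (by positivity)
    refine ⟨B + C * dist (D k) x₀ ^ α, ?_⟩
    filter_upwards [hB, hC] with j hBj hCj
    have := hCj (D k) (mem_closedBall.2 (by linarith)) x₀
      (mem_closedBall_self (by positivity))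
    linarith [abs_sub_abs_le_abs_sub (F j (D k)) (F j x₀)]
  obtain ⟨σ, hσ, hconv⟩ := exists_strictMono_tendsto_of_eventually_bounded _ hbdd
  have hUC : ∀ ρ, UniformCauchySeqOn (fun j => F (σ j)) atTop (closedBall x₀ ρ) := by
    intro ρ
    obtain ⟨C, hC⟩ := hF (max ρ 0 + 1) (by positivity)
    refine (uniformCauchySeqOn_closedBall_of_holder hα (hσ.tendsto_atTop.eventually hC) hD
      fun k => (hconv k).choose_spec.cauchySeq).mono
      (closedBall_subset_closedBall (le_max_left ρ 0))
  choose v hv using fun x =>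
    cauchySeq_tendsto_of_complete ((hUC (dist x x₀)).cauchySeq (mem_closedBall.2 le_rfl))
  refine ⟨σ, hσ, v, tendstoLocallyUniformly_iff_forall_isCompact.2 fun K hK => ?_⟩
  obtain ⟨ρ, -, hρ⟩ := hK.isBounded.subset_closedBall_lt 0 x₀
  exact ((hUC ρ).mono hρ).tendstoUniformlyOn_of_tendsto fun x _ => hv x

end Compactness

section HypothesisB

variable {n : ℕ} {p : ℝ} {X : Set (EucSp n)} {u : EucSp n → EReal}

theorem le_ballSup {x y : EucSp n} {t : ℝ} (hx : x ∈ closedBall y t) : u x ≤ ballSup u y t :=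
  le_sSup (mem_image_of_mem u hx)

theorem ballSup_mono {y y' : EucSp n} {t t' : ℝ} (h : closedBall y t ⊆ closedBall y' t') :
    ballSup u y t ≤ ballSup u y' t' :=
  sSup_le_sSup (image_mono h)

@[simp]
theorem ballSup_zero (y : EucSp n) : ballSup u y 0 = u y := by
  rw [ballSup, closedBall_zero, image_singleton, sSup_singleton]

theorem HypB.ballSup_ne_top (hB : HypB p X u) {y : EucSp n} {t : ℝ}
    (hsub : closedBall y t ⊆ X) : ballSup u y t ≠ ⊤ := by
  rcases (closedBall y t).eq_empty_or_nonempty with h | h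
  · simp [ballSup, h]
  obtain ⟨a, ha, hmax⟩ := (hB.2.1.mono hsub).exists_isMaxOn h (isCompact_closedBall y t)
  refine ne_top_of_le_ne_top (hB.2.2.1 a (hsub ha)).ne (sSup_le ?_)
  rintro _ ⟨x, hx, rfl⟩
  exact hmax hx

theorem HypB.ballSup_ne_bot (hB : HypB p X u) {y : EucSp n} {t : ℝ} (ht : 0 < t)
    (hsub : closedBall y t ⊆ X) : ballSup u y t ≠ ⊥ := by
  obtain ⟨x, hx, hxb⟩ := hB.2.2.2.1 y t ht hsub
  exact ne_bot_of_le_ne_bot hxb (le_ballSup hx)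

theorem HypB.apply_ne_bot (hB : HypB p X u) (hp : p < 2) {y : EucSp n} {t : ℝ} (ht : 0 < t)
    (hsub : closedBall y t ⊆ X) : u y ≠ ⊥ := by
  intro hy
  have hsub' : closedBall y (t / 2) ⊆ X :=
    (closedBall_subset_closedBall (by linarith)).trans hsub
  have hKp := hB.2.2.2.2.2 y (hsub (mem_closedBall_self ht.le)) 0 t (t / 2) t le_rfl ht
    (by positivity) le_rfl (by linarith) hsub
  lift ballSup u y t to ℝ using ⟨hB.ballSup_ne_top hsub, hB.ballSup_ne_bot ht hsub⟩ with a
  lift ballSup u y (t / 2) to ℝ using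
    ⟨hB.ballSup_ne_top hsub', hB.ballSup_ne_bot (by positivity) hsub'⟩ with b
  -- with `s = 0` the left-hand side of the `K_p` inequality becomes `(a - ⊥) * c = ⊤`
  have hc : 0 < t ^ (2 - p) - (t / 2) ^ (2 - p) :=
    sub_pos.2 (Real.rpow_lt_rpow (by positivity) (by linarith) (by linarith))
  rw [ballSup_zero, hy, EReal.coe_sub_bot, EReal.top_mul_coe_of_pos hc, top_le_iff,
    ← EReal.coe_sub, ← EReal.coe_mul] at hKp
  exact EReal.coe_ne_top _ hKp

theorem HypB.coe_toReal_ballSup (hB : HypB p X u) (hp : p < 2) {y : EucSp n} {t τ : ℝ}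
    (ht : 0 < t) (hsub : closedBall y t ⊆ X) (hτ₀ : 0 ≤ τ) (hτ : τ ≤ t) :
    ((ballSup u y τ).toReal : EReal) = ballSup u y τ :=
  EReal.coe_toReal (hB.ballSup_ne_top ((closedBall_subset_closedBall hτ).trans hsub))
    (ne_bot_of_le_ne_bot (hB.apply_ne_bot hp ht hsub) (le_ballSup (mem_closedBall_self hτ₀)))

theorem HypB.double_monotonicity_toReal (hB : HypB p X u) (hp : p < 2) {y : EucSp n}
    {s t s' t' : ℝ} (hs : 0 ≤ s) (hst : s < t) (hss' : s ≤ s') (htt' : t ≤ t') (hs't' : s' < t')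
    (hsub : closedBall y t' ⊆ X) :
    ((ballSup u y t).toReal - (ballSup u y s).toReal) * (t' ^ (2 - p) - s' ^ (2 - p)) ≤
      ((ballSup u y t').toReal - (ballSup u y s').toReal) * (t ^ (2 - p) - s ^ (2 - p)) := by
  have ht' : 0 < t' := (hs.trans hss').trans_lt hs't'
  have hKp := hB.2.2.2.2.2 y (hsub (mem_closedBall_self ht'.le)) s t s' t' hs hst hss' htt'
    hs't' hsub
  rw [← hB.coe_toReal_ballSup hp ht' hsub hs (hst.le.trans htt'),
    ← hB.coe_toReal_ballSup hp ht' hsub (hs.trans hst.le) htt',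
    ← hB.coe_toReal_ballSup hp ht' hsub (hs.trans hss') hs't'.le,
    ← hB.coe_toReal_ballSup hp ht' hsub ht'.le le_rfl] at hKp
  exact_mod_cast hKp

/-- The quotient whose limit as `t ↓ 0` is the paper's `Θ^M(u, 0)`. -/
def ballSupQuotient (u : EucSp n → EReal) (p t : ℝ) : ℝ :=
  ((ballSup u 0 t).toReal - (u 0).toReal) / t ^ (2 - p)

theorem HypB.ballSupQuotient_nonneg (hB : HypB p X u) (hp : p < 2) {t : ℝ} (ht : 0 < t)
    (hsub : closedBall 0 t ⊆ X) : 0 ≤ ballSupQuotient u p t := by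
  have hle : (u 0).toReal ≤ (ballSup u 0 t).toReal :=
    EReal.toReal_le_toReal (le_ballSup (mem_closedBall_self ht.le))
      (hB.apply_ne_bot hp ht hsub) (hB.ballSup_ne_top hsub)
  exact div_nonneg (sub_nonneg.2 hle) (Real.rpow_nonneg ht.le _)

theorem HypB.ballSupQuotient_mono (hB : HypB p X u) (hp : p < 2) {t t' : ℝ} (ht : 0 < t)
    (htt' : t ≤ t') (hsub : closedBall 0 t' ⊆ X) :
    ballSupQuotient u p t ≤ ballSupQuotient u p t' := by
  have hα : 0 < 2 - p := by linarith
  have hKp := hB.double_monotonicity_toReal hp le_rfl ht le_rfl htt' (ht.trans_le htt') hsub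
  rw [Real.zero_rpow hα.ne', sub_zero, sub_zero, ballSup_zero] at hKp
  rw [ballSupQuotient, ballSupQuotient,
    div_le_div_iff₀ (Real.rpow_pos_of_pos ht _) (Real.rpow_pos_of_pos (ht.trans_le htt') _)]
  exact hKp

theorem HypB.exists_tendsto_ballSupQuotient (hB : HypB p X u) (hp : p < 2) {R₀ : ℝ}
    (hR₀ : 0 < R₀) (hball : closedBall 0 R₀ ⊆ X) :
    ∃ Θ, 0 ≤ Θ ∧ Tendsto (ballSupQuotient u p) (𝓝[>] 0) (𝓝 Θ) := by
  have hsub : ∀ t ∈ Ioo 0 R₀, closedBall 0 t ⊆ X := fun t ht =>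
    (closedBall_subset_closedBall ht.2.le).trans hball
  have hnonneg : ∀ t ∈ Ioo 0 R₀, 0 ≤ ballSupQuotient u p t := fun t ht =>
    hB.ballSupQuotient_nonneg hp ht.1 (hsub t ht)
  have hlim := MonotoneOn.tendsto_nhdsWithin_Ioo_right (nonempty_Ioo.2 hR₀)
    (fun t ht t' ht' htt' => hB.ballSupQuotient_mono hp ht.1 htt' (hsub t' ht'))
    ⟨0, forall_mem_image.2 hnonneg⟩
  exact ⟨_, ge_of_tendsto hlim (eventually_of_mem (Ioo_mem_nhdsGT hR₀) hnonneg), hlim⟩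

theorem HypB.oscillation_le (hB : HypB p X u) (hp : p < 2) {a b : ℝ} (ha : 0 ≤ a) (hab : a < b)
    {x y : EucSp n} (hx : ‖x‖ ≤ a) (hy : ‖y‖ ≤ a) (hxy : dist x y ≤ b)
    (hsub : closedBall 0 (a + b) ⊆ X) :
    ((u x).toReal - (u y).toReal) * (b ^ (2 - p) - a ^ (2 - p)) ≤
      ((ballSup u 0 (a + b)).toReal - (u 0).toReal) * dist x y ^ (2 - p) := by
  have hα : 0 < 2 - p := by linarith
  have hb : 0 < b := ha.trans_lt hab
  have hsubz : ∀ z : EucSp n, ‖z‖ ≤ a → closedBall z b ⊆ X := fun z hz =>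
    (closedBall_subset_closedBall' (by rw [dist_zero_right]; linarith)).trans hsub
  have hu0 : (u 0).toReal ≤ (ballSup u 0 (a + b)).toReal :=
    EReal.toReal_le_toReal (le_ballSup (mem_closedBall_self (by linarith)))
      (hB.apply_ne_bot hp (by linarith) hsub) (hB.ballSup_ne_top hsub)
  rcases eq_or_ne x y with rfl | hne
  · rw [sub_self, zero_mul]
    exact mul_nonneg (sub_nonneg.2 hu0) (Real.rpow_nonneg dist_nonneg _)
  have hKp := hB.double_monotonicity_toReal hp le_rfl (dist_pos.2 hne) ha hxy hab (hsubz y hy)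
  rw [Real.zero_rpow hα.ne', sub_zero, ballSup_zero] at hKp
  have hux : (u x).toReal ≤ (ballSup u y (dist x y)).toReal :=
    EReal.toReal_le_toReal (le_ballSup (mem_closedBall.2 le_rfl))
      (hB.apply_ne_bot hp hb (hsubz x hx))
      (hB.ballSup_ne_top ((closedBall_subset_closedBall hxy).trans (hsubz y hy)))
  have hMa : (u 0).toReal ≤ (ballSup u y a).toReal :=
    EReal.toReal_le_toReal (le_ballSup (by rwa [mem_closedBall, dist_zero_left]))
      (hB.apply_ne_bot hp (by linarith) hsub)
      (hB.ballSup_ne_top ((closedBall_subset_closedBall hab.le).trans (hsubz y hy)))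
  have hMb : (ballSup u y b).toReal ≤ (ballSup u 0 (a + b)).toReal :=
    EReal.toReal_le_toReal
      (ballSup_mono (closedBall_subset_closedBall' (by rw [dist_zero_right]; linarith)))
      (hB.ballSup_ne_bot hb (hsubz y hy)) (hB.ballSup_ne_top hsub)
  have hgap : 0 ≤ b ^ (2 - p) - a ^ (2 - p) :=
    sub_nonneg.2 (Real.rpow_le_rpow ha hab.le hα.le)
  calc ((u x).toReal - (u y).toReal) * (b ^ (2 - p) - a ^ (2 - p))
      ≤ ((ballSup u y (dist x y)).toReal - (u y).toReal) * (b ^ (2 - p) - a ^ (2 - p)) := by gcongr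
    _ ≤ ((ballSup u y b).toReal - (ballSup u y a).toReal) * dist x y ^ (2 - p) := hKp
    _ ≤ ((ballSup u 0 (a + b)).toReal - (u 0).toReal) * dist x y ^ (2 - p) := by gcongr

def rescaling (u : EucSp n → EReal) (p r : ℝ) (x : EucSp n) : ℝ :=
  ((u (r • x)).toReal - (u 0).toReal) / r ^ (2 - p)

theorem HypB.rescaling_sub_le (hB : HypB p X u) (hp : p < 2) {ρ c r : ℝ} (hρ : 0 < ρ)
    (hc : 2 * ρ ≤ c) (hr : 0 < r) (hsub : closedBall 0 ((ρ + c) * r) ⊆ X) {x y : EucSp n}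
    (hx : x ∈ closedBall 0 ρ) (hy : y ∈ closedBall 0 ρ) :
    rescaling u p r x - rescaling u p r y ≤
      ballSupQuotient u p ((ρ + c) * r) * ((ρ + c) ^ (2 - p) / (c ^ (2 - p) - ρ ^ (2 - p))) *
        dist x y ^ (2 - p) := by
  have hα : 0 < 2 - p := by linarith
  have hρc : ρ < c := by linarith
  have hnorm : ∀ z ∈ closedBall (0 : EucSp n) ρ, ‖r • z‖ ≤ ρ * r := fun z hz => by
    rw [norm_smul, Real.norm_of_nonneg hr.le, mul_comm]
    exact mul_le_mul_of_nonneg_right (mem_closedBall_zero_iff.1 hz) hr.le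
  have hdist : dist (r • x) (r • y) = r * dist x y := by
    rw [dist_smul₀, Real.norm_of_nonneg hr.le]
  have hxy : dist x y ≤ c := by
    linarith [dist_triangle_right x y 0, mem_closedBall.1 hx, mem_closedBall.1 hy]
  have hosc := hB.oscillation_le hp (by positivity) (mul_lt_mul_of_pos_right hρc hr)
    (hnorm x hx) (hnorm y hy) (by rw [hdist, mul_comm]; gcongr) (by rwa [← add_mul])
  rw [← add_mul, hdist, Real.mul_rpow hr.le dist_nonneg, Real.mul_rpow (hρ.trans hρc).le hr.le,
    Real.mul_rpow hρ.le hr.le, ← sub_mul] at hosc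
  have hr' : 0 < r ^ (2 - p) := Real.rpow_pos_of_pos hr _
  have hgap : 0 < c ^ (2 - p) - ρ ^ (2 - p) := sub_pos.2 (Real.rpow_lt_rpow hρ.le hρc hα)
  have hρc' : 0 < (ρ + c) ^ (2 - p) := Real.rpow_pos_of_pos (by linarith) _
  rw [rescaling, rescaling, ballSupQuotient, div_sub_div_same, sub_sub_sub_cancel_right,
    Real.mul_rpow (by linarith) hr.le, div_le_iff₀ hr']
  calc (u (r • x)).toReal - (u (r • y)).toReal
      = ((u (r • x)).toReal - (u (r • y)).toReal) * ((c ^ (2 - p) - ρ ^ (2 - p)) * r ^ (2 - p))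
          / ((c ^ (2 - p) - ρ ^ (2 - p)) * r ^ (2 - p)) := by field_simp
    _ ≤ ((ballSup u 0 ((ρ + c) * r)).toReal - (u 0).toReal) * (r ^ (2 - p) * dist x y ^ (2 - p))
          / ((c ^ (2 - p) - ρ ^ (2 - p)) * r ^ (2 - p)) := by gcongr
    _ = _ := by field_simp

theorem HypB.eventually_abs_rescaling_sub_le (hB : HypB p X u) (hp : p < 2) {R₀ : ℝ}
    (hR₀ : 0 < R₀) (hball : closedBall 0 R₀ ⊆ X) {Θ : ℝ}
    (hΘ : Tendsto (ballSupQuotient u p) (𝓝[>] 0) (𝓝 Θ)) {ρ C : ℝ} (hρ : 0 < ρ) (hC : Θ < C) :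
    ∀ᶠ r in 𝓝[>] 0, ∀ x ∈ closedBall (0 : EucSp n) ρ, ∀ y ∈ closedBall (0 : EucSp n) ρ,
      |rescaling u p r x - rescaling u p r y| ≤ C * dist x y ^ (2 - p) := by
  set ratio : ℝ → ℝ := fun c => (ρ + c) ^ (2 - p) / (c ^ (2 - p) - ρ ^ (2 - p))
  obtain ⟨c, hcC, hc⟩ : ∃ c, Θ * ratio c < C ∧ 2 * ρ ≤ c :=
    ((((tendsto_rpow_add_div_rpow_sub (by linarith) hρ.le).const_mul Θ).eventually
      (gt_mem_nhds (by simpa using hC))).and (eventually_ge_atTop _)).exists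
  have hscale : Tendsto (fun r => (ρ + c) * r) (𝓝[>] 0) (𝓝[>] 0) :=
    tendsto_nhdsWithin_iff.2 ⟨((continuous_const_mul _).tendsto' 0 0 (mul_zero _)).mono_left
      nhdsWithin_le_nhds,
      eventually_mem_nhdsWithin.mono fun r hr => mul_pos (by linarith : 0 < ρ + c) hr⟩
  have hsmall : ∀ᶠ t in 𝓝[>] 0, ballSupQuotient u p t * ratio c < C ∧ t ≤ R₀ :=
    ((hΘ.mul_const _).eventually (gt_mem_nhds hcC)).and
      (eventually_of_mem (Ioc_mem_nhdsGT hR₀) fun t ht => ht.2)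
  filter_upwards [hscale.eventually hsmall, self_mem_nhdsWithin] with r ⟨hQ, hR⟩ hr
  have hle : ∀ x ∈ closedBall (0 : EucSp n) ρ, ∀ y ∈ closedBall (0 : EucSp n) ρ,
      rescaling u p r x - rescaling u p r y ≤ C * dist x y ^ (2 - p) := fun x hx y hy =>
    (hB.rescaling_sub_le hp hρ hc hr ((closedBall_subset_closedBall hR).trans hball) hx hy).trans
      (mul_le_mul_of_nonneg_right hQ.le (Real.rpow_nonneg dist_nonneg _))
  exact fun x hx y hy => abs_sub_le_iff.2 ⟨hle x hx y hy, dist_comm x y ▸ hle y hy x hx⟩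

end HypothesisB

theorem stmt17_general (n : ℕ) (p : ℝ) (hp2 : p < 2)
    (R₀ : ℝ) (hR₀ : 0 < R₀)
    (X : Set (EucSp n)) (u : EucSp n → EReal) (hB : HypB p X u)
    (hball : Metric.closedBall (0 : EucSp n) R₀ ⊆ X) :
    ∃ Θ : ℝ,
      Tendsto (fun t : ℝ => ((ballSup u 0 t).toReal - (u 0).toReal) / t ^ (2 - p))
        (𝓝[>] 0) (𝓝 Θ) ∧
      -- (i) limsup of the Hölder seminorms of the rescalings is at most Θ^M(u, 0)
      (∀ ρ : ℝ, 0 < ρ → ∀ ε : ℝ, 0 < ε → ∃ δ : ℝ, 0 < δ ∧ ∀ r : ℝ, 0 < r → r ≤ δ →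
        holderSemiR (2 - p)
            (fun x => ((u (r • x)).toReal - (u 0).toReal) / r ^ (2 - p))
            (Metric.closedBall (0 : EucSp n) ρ) ≤ Θ + ε) ∧
      -- in particular the family {u_r} is bounded in Hölder seminorm on each ball
      (∀ ρ : ℝ, 0 < ρ → ∃ δ : ℝ, 0 < δ ∧ ∃ C : ℝ, ∀ r : ℝ, 0 < r → r ≤ δ →
        holderSemiR (2 - p)
            (fun x => ((u (r • x)).toReal - (u 0).toReal) / r ^ (2 - p))
            (Metric.closedBall (0 : EucSp n) ρ) ≤ C) ∧
      -- (ii) every sequence r_j ↓ 0 has a locally uniformly convergent subsequence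
      (∀ rj : ℕ → ℝ, (∀ j, 0 < rj j) → Tendsto rj atTop (𝓝 0) →
        ∃ σ : ℕ → ℕ, StrictMono σ ∧ ∃ v : EucSp n → ℝ,
          TendstoLocallyUniformly
            (fun j x => ((u (rj (σ j) • x)).toReal - (u 0).toReal) / rj (σ j) ^ (2 - p))
            v atTop) := by
  obtain ⟨Θ, hΘ₀, hΘ⟩ := hB.exists_tendsto_ballSupQuotient hp2 hR₀ hball
  have hholder : ∀ ρ : ℝ, 0 < ρ → ∀ C, Θ < C → ∀ᶠ r in 𝓝[>] 0,
      ∀ x ∈ closedBall (0 : EucSp n) ρ, ∀ y ∈ closedBall (0 : EucSp n) ρ,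
        |rescaling u p r x - rescaling u p r y| ≤ C * dist x y ^ (2 - p) :=
    fun ρ hρ C hC => hB.eventually_abs_rescaling_sub_le hp2 hR₀ hball hΘ hρ hC
  have hi : ∀ ρ : ℝ, 0 < ρ → ∀ ε : ℝ, 0 < ε → ∃ δ : ℝ, 0 < δ ∧ ∀ r : ℝ, 0 < r → r ≤ δ →
      holderSemiR (2 - p) (rescaling u p r) (closedBall 0 ρ) ≤ Θ + ε := fun ρ hρ ε hε =>
    exists_forall_of_eventually_nhdsGT <| (hholder ρ hρ (Θ + ε) (by linarith)).mono
      fun _ => holderSemiR_le (by linarith)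
  refine ⟨Θ, hΘ, hi, fun ρ hρ => ?_, fun rj hpos hlim => ?_⟩
  · obtain ⟨δ, hδ, hle⟩ := hi ρ hρ 1 one_pos
    exact ⟨δ, hδ, Θ + 1, hle⟩
  · have hrj : Tendsto rj atTop (𝓝[>] 0) :=
      tendsto_nhdsWithin_iff.2 ⟨hlim, Eventually.of_forall hpos⟩
    exact exists_strictMono_tendstoLocallyUniformly_of_holder (by linarith : 0 < 2 - p)
      (x₀ := 0) ⟨0, Eventually.of_forall fun j => by simp [rescaling]⟩
      fun ρ hρ => ⟨Θ + 1, hrj.eventually (hholder ρ hρ _ (by linarith))⟩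

/-- Existence of tangents for `1 ≤ p < 2`: the rescalings
`u_r(x) = (u(rx) − u(0))/r^α` have `limsup_{r↓0} ‖u_r‖_α(B_ρ) ≤ Θ^M(u,0)`, are
eventually bounded in `α`-Hölder seminorm, and every sequence `r_j ↓ 0` has a
subsequence along which `u_{r_j}` converges locally uniformly. -/
theorem stmt17 (n : ℕ) (p : ℝ) (hp1 : 1 ≤ p) (hp2 : p < 2)
    (R₀ : ℝ) (hR₀ : 0 < R₀)
    (X : Set (EucSp n)) (u : EucSp n → EReal) (hB : HypB p X u)
    (hball : Metric.closedBall (0 : EucSp n) R₀ ⊆ X) :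
    ∃ Θ : ℝ,
      Tendsto (fun t : ℝ => ((ballSup u 0 t).toReal - (u 0).toReal) / t ^ (2 - p))
        (𝓝[>] 0) (𝓝 Θ) ∧
      -- (i) limsup of the Hölder seminorms of the rescalings is at most Θ^M(u, 0)
      (∀ ρ : ℝ, 0 < ρ → ∀ ε : ℝ, 0 < ε → ∃ δ : ℝ, 0 < δ ∧ ∀ r : ℝ, 0 < r → r ≤ δ →
        holderSemiR (2 - p)
            (fun x => ((u (r • x)).toReal - (u 0).toReal) / r ^ (2 - p))
            (Metric.closedBall (0 : EucSp n) ρ) ≤ Θ + ε) ∧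
      -- in particular the family {u_r} is bounded in Hölder seminorm on each ball
      (∀ ρ : ℝ, 0 < ρ → ∃ δ : ℝ, 0 < δ ∧ ∃ C : ℝ, ∀ r : ℝ, 0 < r → r ≤ δ →
        holderSemiR (2 - p)
            (fun x => ((u (r • x)).toReal - (u 0).toReal) / r ^ (2 - p))
            (Metric.closedBall (0 : EucSp n) ρ) ≤ C) ∧
      -- (ii) every sequence r_j ↓ 0 has a locally uniformly convergent subsequence
      (∀ rj : ℕ → ℝ, (∀ j, 0 < rj j) → Tendsto rj atTop (𝓝 0) →
        ∃ σ : ℕ → ℕ, StrictMono σ ∧ ∃ v : EucSp n → ℝ,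
          TendstoLocallyUniformly
            (fun j x => ((u (rj (σ j) • x)).toReal - (u 0).toReal) / rj (σ j) ^ (2 - p))
            v atTop) :=
  stmt17_general n p hp2 R₀ hR₀ X u hB hball

end
end

section
/- Let a < b be real numbers and let ψ : (a, b) → ℝ be an upper semicontinuous viscosity subsolution of the one-variable subequation 'λ ≥ 0 or a ≥ 0'; that is, for every t₀ ∈ (a, b) and every C² function φ defined near t₀ with ψ ≤ φ near t₀ and ψ(t₀) = φ(t₀), one has φ′(t₀) ≥ 0 or φ″(t₀) ≥ 0. Then one of the following holds: (1) ψ is nondecreasing on (a, b); or (2) ψ is nonincreasing and convex on (a, b); or (3) there exists c ∈ (a, b) such that ψ is nonincreasing and convex on (a, c) and nondecreasing on (c, b). -/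
/-!
The test function `ψ m + δ e^m - δ e^y` has negative first and second derivatives, so
`ψ + δ exp` has no local maximum; for small `δ > 0` this forces `ψ ≤ max (ψ s) (ψ t)` on every
`[s, t]`, i.e. `ψ` is quasiconvex, hence nonincreasing up to some `c` and nondecreasing after it.
Adding `q x` with `q ≥ 0` preserves subsolutions, so `ψ + q x` is quasiconvex too; on `(a, c)`,
taking `-q` to be the slope of a chord turns this into the chord inequality, i.e. convexity.
-/

open Set Filter Topology Real

noncomputable section

def IsViscositySubsolutionOn (ψ : ℝ → ℝ) (I : Set ℝ) : Prop :=
  ∀ t₀ ∈ I, ∀ φ : ℝ → ℝ, ContDiffAt ℝ 2 φ t₀ →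
    (∀ᶠ t in 𝓝[I] t₀, ψ t ≤ φ t) → ψ t₀ = φ t₀ → 0 ≤ deriv φ t₀ ∨ 0 ≤ deriv (deriv φ) t₀

namespace IsViscositySubsolutionOn

variable {ψ : ℝ → ℝ} {I : Set ℝ}

theorem add_mul_id (hψ : IsViscositySubsolutionOn ψ I) {q : ℝ} (hq : 0 ≤ q) :
    IsViscositySubsolutionOn (fun x => ψ x + q * x) I := by
  intro t₀ ht₀ φ hφ hle heq
  have hdiff : ∀ᶠ y in 𝓝 t₀, DifferentiableAt ℝ φ y :=
    (hφ.eventually (by simp)).mono fun y hy => hy.differentiableAt (by simp)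
  have hderiv : deriv (fun y => φ y - q * y) =ᶠ[𝓝 t₀] fun y => deriv φ y - q :=
    hdiff.mono fun y hy => by
      have h : HasDerivAt (fun y => φ y - q * y) (deriv φ y - q * 1) y :=
        hy.hasDerivAt.sub ((hasDerivAt_id' y).const_mul q)
      simpa using h.deriv
  have htest := hψ t₀ ht₀ (fun y => φ y - q * y) (hφ.sub (contDiffAt_id.const_smul q))
    (hle.mono fun y hy => by linarith) (by simp [← heq])
  rw [hderiv.deriv_eq, hderiv.self_of_nhds, deriv_sub_const] at htest
  exact htest.imp_left fun h => by linarith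

theorem not_isLocalMaxOn_add_mul_exp (hψ : IsViscositySubsolutionOn ψ I) {m δ : ℝ} (hm : m ∈ I)
    (hδ : 0 < δ) : ¬ IsLocalMaxOn (fun y => ψ y + δ * exp y) I m := by
  intro hmax
  set φ : ℝ → ℝ := fun y => ψ m + δ * exp m - δ * exp y
  have hφ' : deriv φ = fun y => -(δ * exp y) := by
    ext y
    simp [φ]
  have hφ'' : deriv (deriv φ) m = -(δ * exp m) := by simp [hφ']
  have htest := hψ m hm φ (by fun_prop) (hmax.mono fun y hy => by simp only [φ]; linarith)
    (by simp [φ])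
  rw [hφ'', hφ'] at htest
  beta_reduce at htest
  have := mul_pos hδ (exp_pos m)
  rcases htest with h | h <;> linarith

theorem le_max_of_mem_Icc (hψ : IsViscositySubsolutionOn ψ I) {s t x : ℝ}
    (husc : UpperSemicontinuousOn ψ (Icc s t)) (hst : Icc s t ⊆ I) (hx : x ∈ Icc s t) :
    ψ x ≤ max (ψ s) (ψ t) := by
  by_contra! hlt
  set M := max (ψ s) (ψ t)
  set δ := (ψ x - M) / (2 * exp t)
  have hδ : 0 < δ := div_pos (by linarith) (by positivity)
  have hδt : δ * exp t < ψ x - M := by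
    rw [div_mul_eq_mul_div, div_lt_iff₀ (by positivity)]
    nlinarith [exp_pos t]
  have hgusc : UpperSemicontinuousOn (fun y => ψ y + δ * exp y) (Icc s t) :=
    husc.add (continuous_const.mul continuous_exp).continuousOn.upperSemicontinuousOn
  obtain ⟨m, hm, hmax⟩ := hgusc.exists_isMaxOn ⟨x, hx⟩ isCompact_Icc
  have hbeat : ∀ e ∈ Icc s t, ψ e ≤ M → ψ e + δ * exp e < ψ m + δ * exp m := fun e he heM =>
    calc ψ e + δ * exp e ≤ M + δ * exp t := by gcongr; exact he.2
      _ < ψ x := by linarith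
      _ < ψ x + δ * exp x := by have := mul_pos hδ (exp_pos x); linarith
      _ ≤ ψ m + δ * exp m := hmax hx
  have hms : s < m := hm.1.lt_of_ne fun h => by
    subst h; exact (hbeat s hm le_sup_left).false
  have hmt : m < t := hm.2.lt_of_ne fun h => by
    subst h; exact (hbeat m hm le_sup_right).false
  exact hψ.not_isLocalMaxOn_add_mul_exp (hst hm) hδ ((hmax.isLocalMax (Icc_mem_nhds hms hmt)).on I)

theorem quasiconvexOn (hψ : IsViscositySubsolutionOn ψ I) (hI : I.OrdConnected)
    (husc : UpperSemicontinuousOn ψ I) : QuasiconvexOn ℝ I ψ := fun _ =>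
  convex_iff_ordConnected.2 ⟨fun _ hs _ ht _ hx =>
    ⟨hI.out hs.1 ht.1 hx, (hψ.le_max_of_mem_Icc (husc.mono (hI.out hs.1 ht.1)) (hI.out hs.1 ht.1)
      hx).trans (max_le hs.2 ht.2)⟩⟩

end IsViscositySubsolutionOn

namespace QuasiconvexOn

variable {β : Type*} [LinearOrder β] {f : ℝ → β}

theorem le_max_of_mem_Icc {s : Set ℝ} (hf : QuasiconvexOn ℝ s f) {u t x : ℝ} (hu : u ∈ s)
    (ht : t ∈ s) (hx : x ∈ Icc u t) : f x ≤ max (f u) (f t) :=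
  ((hf _).ordConnected.out ⟨hu, le_max_left _ _⟩ ⟨ht, le_max_right _ _⟩ hx).2

theorem antitoneOn_of_forall_not_monotoneOn {a b c : ℝ} (hf : QuasiconvexOn ℝ (Ioo a b) f)
    (h : ∀ v ∈ Ioo a c, ¬ MonotoneOn f (Ioo v b)) : AntitoneOn f (Ioo a c) := by
  intro u hu v hv huv
  by_contra! hlt
  obtain ⟨s, hvs, -, t, hvt, htb, hst, hts⟩ :
      ∃ s, v < s ∧ s < b ∧ ∃ t, v < t ∧ t < b ∧ s ≤ t ∧ f t < f s := by
    simpa [MonotoneOn] using h v hv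
  have hu' : u ∈ Ioo a b := ⟨hu.1, by linarith⟩
  have ht' : t ∈ Ioo a b := ⟨by linarith [hv.1], htb⟩
  have hv_le := hf.le_max_of_mem_Icc hu' ht' ⟨huv, hvt.le⟩
  have hs_le := hf.le_max_of_mem_Icc hu' ht' ⟨by linarith, hst⟩
  rcases max_choice (f u) (f t) with hmax | hmax <;> rw [hmax] at hv_le hs_le
  exacts [hlt.not_ge hv_le, hts.not_ge hs_le]

theorem exists_antitoneOn_monotoneOn {a b : ℝ} (hf : QuasiconvexOn ℝ (Ioo a b) f) :
    ∃ c, AntitoneOn f (Ioo a c) ∧ MonotoneOn f (Ioo c b) := by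
  set S := {t | a ≤ t ∧ MonotoneOn f (Ioo t b)}
  have hS : S.Nonempty := ⟨max a b, le_max_left a b, by
    rw [Ioo_eq_empty (not_lt.2 (le_max_right a b))]
    exact subsingleton_empty.monotoneOn (f := f)⟩
  have hSbdd : BddBelow S := ⟨a, fun t ht => ht.1⟩
  refine ⟨sInf S, hf.antitoneOn_of_forall_not_monotoneOn fun v hv hmono => ?_,
    fun u hu v hv huv => ?_⟩
  · exact (csInf_le hSbdd ⟨hv.1.le, hmono⟩).not_gt hv.2
  · obtain ⟨t, ht, htu⟩ := exists_lt_of_csInf_lt hS hu.1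
    exact ht.2 ⟨htu, hu.2⟩ ⟨htu.trans_le huv, hv.2⟩ huv

end QuasiconvexOn

theorem convexOn_of_antitoneOn_of_quasiconvexOn_add_mul {s : Set ℝ} {f : ℝ → ℝ}
    (hs : Convex ℝ s) (hanti : AntitoneOn f s)
    (hq : ∀ q : ℝ, 0 ≤ q → QuasiconvexOn ℝ s fun x => f x + q * x) : ConvexOn ℝ s f := by
  refine LinearOrder.convexOn_of_lt hs fun u hu v hv huv θ η hθ hη hθη => ?_
  set q := (f u - f v) / (v - u)
  have hvu : 0 < v - u := sub_pos.2 huv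
  have hslope : q * (v - u) = f u - f v := div_mul_cancel₀ _ hvu.ne'
  have hchord : f v + q * v = f u + q * u := by linarith
  have hle := (quasiconvexOn_iff_le_max.1 (hq q (div_nonneg (sub_nonneg.2 (hanti hu hv huv.le))
    hvu.le))).2 hu hv hθ.le hη.le hθη
  simp only [smul_eq_mul, hchord, max_self] at hle ⊢
  calc f (θ * u + η * v) ≤ f u + q * u - q * (θ * u + η * v) := by linarith
    _ = θ * f u + η * f v := by linear_combination (-(f u + q * u)) * hθη - η * hslope

theorem stmt19_general (a b : ℝ) (ψ : ℝ → ℝ)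
    (husc : UpperSemicontinuousOn ψ (Set.Ioo a b))
    (hsub : ∀ t₀ ∈ Set.Ioo a b, ∀ φ : ℝ → ℝ, ContDiffAt ℝ 2 φ t₀ →
      (∀ᶠ t in 𝓝[Set.Ioo a b] t₀, ψ t ≤ φ t) → ψ t₀ = φ t₀ →
      0 ≤ deriv φ t₀ ∨ 0 ≤ deriv (deriv φ) t₀) :
    MonotoneOn ψ (Set.Ioo a b) ∨
    (AntitoneOn ψ (Set.Ioo a b) ∧ ConvexOn ℝ (Set.Ioo a b) ψ) ∨
    (∃ c ∈ Set.Ioo a b, AntitoneOn ψ (Set.Ioo a c) ∧ ConvexOn ℝ (Set.Ioo a c) ψ ∧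
      MonotoneOn ψ (Set.Ioo c b)) := by
  have hψ : IsViscositySubsolutionOn ψ (Ioo a b) := hsub
  have hconv : ∀ c ≤ b, AntitoneOn ψ (Ioo a c) → ConvexOn ℝ (Ioo a c) ψ := fun c hcb hanti =>
    convexOn_of_antitoneOn_of_quasiconvexOn_add_mul (convex_Ioo a c) hanti fun q hq =>
      (convex_Ioo a c).quasiconvexOn_restrict ((hψ.add_mul_id hq).quasiconvexOn ordConnected_Ioo
        (husc.add (continuous_const.mul continuous_id).continuousOn.upperSemicontinuousOn))
        (Ioo_subset_Ioo_right hcb)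
  obtain ⟨c, hanti, hmono⟩ := (hψ.quasiconvexOn ordConnected_Ioo husc).exists_antitoneOn_monotoneOn
  rcases le_or_gt c a with hca | hac
  · exact Or.inl (hmono.mono (Ioo_subset_Ioo_left hca))
  rcases le_or_gt b c with hbc | hcb
  · have hanti' := hanti.mono (Ioo_subset_Ioo_right hbc)
    exact Or.inr (Or.inl ⟨hanti', hconv b le_rfl hanti'⟩)
  · exact Or.inr (Or.inr ⟨c, ⟨hac, hcb⟩, hanti, hconv c hcb.le hanti, hmono⟩)

/-- The Increasing/Decreasing dichotomy for viscosity subsolutions of the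
one-variable subaffine subequation `λ ≥ 0 or a ≥ 0` on an interval `(a, b)`:
either `ψ` is nondecreasing, or nonincreasing and convex, or nonincreasing and
convex up to some `c` and nondecreasing afterwards. -/
theorem stmt19 (a b : ℝ) (hab : a < b) (ψ : ℝ → ℝ)
    (husc : UpperSemicontinuousOn ψ (Set.Ioo a b))
    (hsub : ∀ t₀ ∈ Set.Ioo a b, ∀ φ : ℝ → ℝ, ContDiffAt ℝ 2 φ t₀ →
      (∀ᶠ t in 𝓝[Set.Ioo a b] t₀, ψ t ≤ φ t) → ψ t₀ = φ t₀ →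
      0 ≤ deriv φ t₀ ∨ 0 ≤ deriv (deriv φ) t₀) :
    MonotoneOn ψ (Set.Ioo a b) ∨
    (AntitoneOn ψ (Set.Ioo a b) ∧ ConvexOn ℝ (Set.Ioo a b) ψ) ∨
    (∃ c ∈ Set.Ioo a b, AntitoneOn ψ (Set.Ioo a c) ∧ ConvexOn ℝ (Set.Ioo a c) ψ ∧
      MonotoneOn ψ (Set.Ioo c b)) :=
  stmt19_general a b ψ husc hsub

end
end
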